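/- In the ring R = k[x₁, x₂, …, y]/(x_i x_j, y^i x_i : i, j ≥ 1), let h be the R-module endomorphism of the y-power torsion submodule t(R) determined by h(x_n) = y·x_{n+1} for all n ≥ 1, and let M be the direct limit (colimit) of the chain t(R) →h t(R) →h t(R) →h ⋯ in the category of R-modules. Then M ≠ 0 and multiplication by y is surjective on M, i.e. y·M = M; in particular M is a nonzero module divisible with respect to the filter of ideals containing a power of (y). -/

import Mathlib

/-!
Every `y`-torsion element of `R` lies in the ideal `(x₁, x₂, …)`: killing the `xₙ` maps `R` onto
the domain `k[y]`, where `y` is a nonzerodivisor. Hence `h(t(R)) ⊆ y·t(R)`, and since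
`ofᵢ a = ofᵢ₊₁ (h a)` in the colimit, multiplication by `y` is surjective there. On the other hand
`hᵐ(x₁) = yᵐ x_{m+1} ≠ 0` for every `m`, as the map `R → k[X]/(X^{2m+2})` with `y ↦ X`,
`x_{m+1} ↦ X^{m+1}` and all other `xₙ ↦ 0` shows; so the image of `x₁` in the colimit is nonzero.
-/

open MvPolynomial

set_option maxHeartbeats 1000000
set_option synthInstance.maxHeartbeats 400000

noncomputable section

/-- The polynomial ring `k[x₁, x₂, …, y]`, with `y` the variable `none` and `xₙ` (`n ≥ 1`)
the variable `some n`. -/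
abbrev PolyR (k : Type) [Field k] : Type := MvPolynomial (Option ℕ+) k

/-- The variable `y`. -/
def yP (k : Type) [Field k] : PolyR k := X none

/-- The variable `xₙ`, for `n ≥ 1`. -/
def xP (k : Type) [Field k] (n : ℕ+) : PolyR k := X (some n)

/-- The set of relations `xᵢxⱼ` (`i, j ≥ 1`) and `yⁱxᵢ` (`i ≥ 1`). -/
def relSet (k : Type) [Field k] : Set (PolyR k) :=
  {p | (∃ i j : ℕ+, p = xP k i * xP k j) ∨ (∃ i : ℕ+, p = yP k ^ (i : ℕ) * xP k i)}

/-- The ring `R = k[x₁, x₂, …, y]/(xᵢxⱼ, yⁱxᵢ : i, j ≥ 1)`. -/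
abbrev Rg (k : Type) [Field k] : Type := PolyR k ⧸ Ideal.span (relSet k)

/-- The image of `y` in `R`. -/
def yR (k : Type) [Field k] : Rg k := Ideal.Quotient.mk _ (yP k)

/-- The image of `xₙ` in `R`. -/
def xR (k : Type) [Field k] (n : ℕ+) : Rg k := Ideal.Quotient.mk _ (xP k n)

/-- The `y`-power torsion submodule `t(R) = {r ∈ R : yᵏ r = 0 for some k ≥ 0}`. -/
def tR (k : Type) [Field k] : Submodule (Rg k) (Rg k) :=
  Submodule.torsion' (Rg k) (Rg k) (Submonoid.powers (yR k))

end


section IterateDirectLimit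

variable {R M : Type*} [Semiring R] [AddCommMonoid M] [Module R M]

theorem directedSystem_pow (f : Module.End R M) :
    DirectedSystem (fun _ : ℕ => M) (fun i j _ => ⇑(f ^ (j - i))) where
  map_self i x := by simp
  map_map {l j i} hij hjl x := by
    rw [← Module.End.mul_apply, ← pow_add, tsub_add_tsub_cancel hjl hij]

theorem exists_pow_apply_eq_zero_of_of_eq_zero (f : Module.End R M) {i : ℕ} {a : M}
    (ha : Module.DirectLimit.of R ℕ (fun _ : ℕ => M) (fun i j _ => f ^ (j - i)) i a = 0) :
    ∃ n, (f ^ n) a = 0 := by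
  have := directedSystem_pow f
  obtain ⟨j, -, hj⟩ := Module.DirectLimit.of.zero_exact ha
  exact ⟨j - i, hj⟩

theorem surjective_smul_directLimit_pow (f : Module.End R M) (r : R)
    (hf : ∀ a, ∃ c, f a = r • c) :
    Function.Surjective fun z : Module.DirectLimit (fun _ : ℕ => M) (fun i j _ => f ^ (j - i)) =>
      r • z := by
  intro z
  obtain ⟨i, a, rfl⟩ := Module.DirectLimit.exists_of z
  obtain ⟨c, hc⟩ := hf a
  refine ⟨Module.DirectLimit.of R ℕ _ _ (i + 1) c, ?_⟩
  dsimp only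
  rw [← map_smul, ← hc, ← Module.DirectLimit.of_f (hij := i.le_succ)]
  simp

end IterateDirectLimit

theorem MvPolynomial.sub_aeval_elim_mem_span_X_some {σ R : Type*} [CommRing R]
    (p : MvPolynomial (Option σ) R) :
    p - aeval (fun o => o.elim (X none) fun _ => 0) p ∈
      Ideal.span (Set.range fun i => (X (some i) : MvPolynomial (Option σ) R)) := by
  induction p using MvPolynomial.induction_on with
  | C a => simp
  | add p q hp hq => simpa [add_sub_add_comm] using add_mem hp hq
  | mul_X p o hp =>
    cases o with
    | none => simpa [sub_mul] using Ideal.mul_mem_right (X none) _ hp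
    | some i => simpa using Ideal.mul_mem_left _ p (Ideal.subset_span (Set.mem_range_self i))

section TorsionOfR

variable {k : Type} [Field k]

theorem span_relSet_le_ker {A : Type*} [CommRing A] [Algebra k A] (f : PolyR k →ₐ[k] A)
    (hxx : ∀ i j, f (xP k i) * f (xP k j) = 0)
    (hyx : ∀ i : ℕ+, f (yP k) ^ (i : ℕ) * f (xP k i) = 0) :
    Ideal.span (relSet k) ≤ RingHom.ker f := by
  rw [Ideal.span_le]
  rintro p (⟨i, j, rfl⟩ | ⟨i, rfl⟩)
  · simpa using hxx i j
  · simpa using hyx i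

theorem xR_mem_tR (n : ℕ+) : xR k n ∈ tR k := by
  refine ⟨⟨yR k ^ (n : ℕ), n, rfl⟩, ?_⟩
  show yR k ^ (n : ℕ) * xR k n = 0
  rw [yR, xR, ← map_pow, ← map_mul, Ideal.Quotient.eq_zero_iff_mem]
  exact Ideal.subset_span (Or.inr ⟨n, rfl⟩)

variable (k) in
noncomputable def xT (n : ℕ+) : tR k := ⟨xR k n, xR_mem_tR n⟩

@[simp]
theorem coe_xT (n : ℕ+) : (xT k n : Rg k) = xR k n := rfl

theorem yR_pow_mul_xR_ne_zero (m : ℕ) : yR k ^ m * xR k m.succPNat ≠ 0 := by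
  let v : Option ℕ+ → Polynomial k := fun o =>
    o.elim Polynomial.X fun i => if i = m.succPNat then Polynomial.X ^ (m + 1) else 0
  let I := Ideal.span {(Polynomial.X : Polynomial k) ^ (2 * m + 2)}
  let ψ : PolyR k →ₐ[k] Polynomial k ⧸ I := (Ideal.Quotient.mkₐ k I).comp (aeval v)
  have hψ_eq_zero (p : PolyR k) : ψ p = 0 ↔ Polynomial.X ^ (2 * m + 2) ∣ aeval v p := by
    rw [AlgHom.comp_apply, Ideal.Quotient.mkₐ_eq_mk, Ideal.Quotient.eq_zero_iff_mem,
      Ideal.mem_span_singleton]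
  have two_mul_add_two_eq : 2 * m + 2 = (m + 1) + (m + 1) := by ring
  have hv : ∀ i, Polynomial.X ^ (m + 1) ∣ aeval v (xP k i) := by
    intro i
    by_cases hi : i = m.succPNat <;> simp [v, xP, hi]
  have hker := span_relSet_le_ker ψ (fun i j => ?_) (fun i => ?_)
  · intro h0
    have hmem : yP k ^ m * xP k m.succPNat ∈ Ideal.span (relSet k) := by
      rwa [← Ideal.Quotient.eq_zero_iff_mem, map_mul, map_pow]
    have := (hψ_eq_zero _).1 (hker hmem)
    simp only [v, yP, xP, map_mul, map_pow, aeval_X, Option.elim, if_pos] at this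
    rw [← pow_add, pow_dvd_pow_iff Polynomial.X_ne_zero Polynomial.not_isUnit_X] at this
    omega
  · rw [← map_mul, hψ_eq_zero, map_mul, two_mul_add_two_eq, pow_add]
    exact mul_dvd_mul (hv i) (hv j)
  · rw [← map_pow, ← map_mul, hψ_eq_zero]
    simp only [yP, xP, map_mul, map_pow, aeval_X]
    by_cases hi : i = m.succPNat
    · subst hi
      simp [v, ← pow_add, two_mul_add_two_eq]
    · simp [v, hi]

theorem tR_le_span_xR : tR k ≤ Ideal.span (Set.range (xR k)) := by
  rintro a ⟨⟨_, j, rfl⟩, hja⟩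
  obtain ⟨p, rfl⟩ := Ideal.Quotient.mk_surjective a
  let φ : PolyR k →ₐ[k] PolyR k := aeval fun o => o.elim (X none) fun _ => 0
  have hφp : φ p = 0 := by
    have hmem : yP k ^ j * p ∈ Ideal.span (relSet k) := by
      rw [← Ideal.Quotient.eq_zero_iff_mem, map_mul, map_pow]
      exact hja
    have := span_relSet_le_ker φ (by simp [φ, xP]) (by simp [φ, xP]) hmem
    simpa [φ, yP, X_ne_zero] using this
  have hp := MvPolynomial.sub_aeval_elim_mem_span_X_some p
  rw [show aeval _ p = φ p from rfl, hφp, sub_zero] at hp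
  have := Ideal.mem_map_of_mem (Ideal.Quotient.mk (Ideal.span (relSet k))) hp
  rwa [Ideal.map_span, ← Set.range_comp] at this

theorem span_range_xT : Submodule.span (Rg k) (Set.range (xT k)) = ⊤ := by
  refine eq_top_iff.2 fun a _ => ?_
  have ha : (a : Rg k) ∈ (Submodule.span (Rg k) (Set.range (xT k))).map (tR k).subtype := by
    rw [Submodule.map_span, ← Set.range_comp]
    exact tR_le_span_xR a.2
  obtain ⟨b, hb, hba⟩ := ha
  rwa [← Subtype.ext hba]

end TorsionOfR

section Shift

variable {k : Type} [Field k] {h : tR k →ₗ[Rg k] tR k}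

theorem pow_apply_xT_one (hh : ∀ n, h (xT k n) = yR k • xT k (n + 1)) (m : ℕ) :
    (h ^ m) (xT k 1) = yR k ^ m • xT k m.succPNat := by
  induction m with
  | zero => rw [pow_zero, pow_zero, one_smul]; rfl
  | succ m ih =>
    rw [pow_succ', Module.End.mul_apply, ih, map_smul, hh]
    apply Subtype.ext
    simp only [Submodule.coe_smul, smul_eq_mul, coe_xT, pow_succ, mul_assoc]
    rfl

theorem exists_yR_smul_eq (hh : ∀ n, h (xT k n) = yR k • xT k (n + 1)) (a : tR k) :
    ∃ c, h a = yR k • c := by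
  have hspan : Submodule.span (Rg k) (Set.range (xT k)) ≤
      (LinearMap.range (yR k • LinearMap.id)).comap h := by
    rw [Submodule.span_le]
    rintro _ ⟨n, rfl⟩
    exact ⟨xT k (n + 1), (hh n).symm⟩
  obtain ⟨c, hc⟩ := hspan (by rw [span_range_xT]; trivial)
  exact ⟨c, hc.symm⟩

end Shift

/-- In `R = k[x₁, x₂, …, y]/(xᵢxⱼ, yⁱxᵢ)`, let `h` be the endomorphism of
`t(R)` with `h(xₙ) = y·x_{n+1}`, and let `M` be the direct limit of the chain
`t(R) → t(R) → ⋯` with transition maps (iterates of) `h`. Then `M ≠ 0` and multiplication by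
`y` is surjective on `M`; in particular `M` is a nonzero divisible module with respect to the
filter of ideals containing a power of `(y)`. -/
theorem stmt_14 (k : Type) [Field k] (h : tR k →ₗ[Rg k] tR k)
    (hh : ∀ (n : ℕ+) (a : tR k), (a : Rg k) = xR k n →
      ((h a : Rg k) = yR k * xR k (n + 1))) :
    Nontrivial (Module.DirectLimit (R := Rg k) (ι := ℕ) (fun _ : ℕ => tR k)
      (fun i j _ => (h ^ (j - i) : tR k →ₗ[Rg k] tR k))) ∧
    Function.Surjective
      (fun m : Module.DirectLimit (R := Rg k) (ι := ℕ) (fun _ : ℕ => tR k)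
          (fun i j _ => (h ^ (j - i) : tR k →ₗ[Rg k] tR k)) =>
        yR k • m) := by
  have hxT : ∀ n, h (xT k n) = yR k • xT k (n + 1) := fun n => Subtype.ext (hh n _ rfl)
  refine ⟨nontrivial_of_ne (Module.DirectLimit.of (Rg k) ℕ _ _ 0 (xT k 1)) 0 fun h0 => ?_,
    surjective_smul_directLimit_pow h _ (exists_yR_smul_eq hxT)⟩
  obtain ⟨m, hm⟩ := exists_pow_apply_eq_zero_of_of_eq_zero h h0
  apply yR_pow_mul_xR_ne_zero (k := k) m
  simpa [pow_apply_xT_one hxT] using congrArg Subtype.val hm
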